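/- arXiv:1112.6255 — 2 statements merged into one kernel-verified Lean document; each statement's English description precedes it below -/
import Mathlib

section
/- Let (G,Λ,k,Z) be an untangled instance of Compression Group Feedback Vertex Set (all arcs with both endpoints outside Z have label 1_Σ). Let z ∈ Z, let H = F(G,Λ,Z,z) be the flow graph, and let v ∈ V(G)∖Z. If in H there are at least k+2 paths from v to Σ_z that are vertex-disjoint apart from v, then every set X ⊆ V(G)∖Z with |X| ≤ k such that (G∖X,Λ) has no non-null cycle must contain v. -/
/-!
Suppose a solution `X` misses `v`. The `k + 2` paths meet only in `v` and `|X| ≤ k`, so two of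
them avoid `X`; say they end at the terminals `g₁, g₂ ∈ Σ_z`. Reading each terminal as `z`, the
first path followed by the second one backwards is a closed walk through `z` in `G - X`. Every arc
outside `Z` is labelled `1`, so this walk has label `g₁⁻¹ * g₂`, which must be `1`. Then `g₁ = g₂`
is a common vertex of the two paths other than `v`.
-/

/-- Product of edge labels along a list of vertices (consecutive pairs). -/
def chainProd {V G : Type*} [Group G] (Λ : V → V → G) : List V → G
  | [] => 1
  | [_] => 1
  | u :: v :: rest => Λ u v * chainProd Λ (v :: rest)

/-- Adjacency of the flow graph `F(G,Λ,Z,z)`: the underlying undirected graph of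
`G[V∖Z]`, plus a vertex for each group element `g ∈ Σ_z`, adjacent to all
`v ∈ V∖Z` with an arc `(z,v)` labeled `g`. -/
def flowAdj {V Γ : Type*} [Group Γ] (Arc : V → V → Prop) (Λ : V → V → Γ)
    (Z : Set V) (z : V) : (V ⊕ Γ) → (V ⊕ Γ) → Prop
  | Sum.inl u, Sum.inl w => u ≠ w ∧ u ∉ Z ∧ w ∉ Z ∧ Arc u w
  | Sum.inl u, Sum.inr g => u ∉ Z ∧ Arc z u ∧ Λ z u = g
  | Sum.inr g, Sum.inl u => u ∉ Z ∧ Arc z u ∧ Λ z u = g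
  | Sum.inr _, Sum.inr _ => False

open Finset Function

theorem List.exists_eq_cons_append_singleton {α : Type*} {l : List α} {a b : α}
    (ha : l.head? = some a) (hb : l.getLast? = some b) (hab : a ≠ b) :
    ∃ m, l = a :: (m ++ [b]) := by
  obtain ⟨t, rfl⟩ := List.head?_eq_some_iff.1 ha
  obtain ⟨ys, hys⟩ := List.getLast?_eq_some_iff.1 hb
  rcases List.cons_eq_append_iff.1 hys with ⟨-, h⟩ | ⟨m, -, rfl⟩
  · exact absurd (List.cons_eq_cons.1 h).1.symm hab
  · exact ⟨m, rfl⟩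

theorem exists_ne_disjoint_of_card_add_two_le {ι α : Type*} [Fintype ι] {S : ι → Set α}
    (hS : Pairwise (Disjoint on S)) (X : Finset α) (hX : X.card + 2 ≤ Fintype.card ι) :
    ∃ i j, i ≠ j ∧ Disjoint (S i) X ∧ Disjoint (S j) X := by
  classical
  have hbad : (univ.filter fun i => ¬Disjoint (S i) X).card ≤ X.card := by
    refine card_le_card_of_forall_subsingleton (fun i x => x ∈ S i) ?_ ?_
    · intro i hi
      obtain ⟨x, hxS, hxX⟩ := Set.not_disjoint_iff.1 (mem_filter.1 hi).2
      exact ⟨x, hxX, hxS⟩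
    · intro x _ i hi j hj
      by_contra hij
      exact Set.disjoint_left.1 (hS hij) hi.2 hj.2
  have hgood : 1 < (univ.filter fun i => Disjoint (S i) X).card := by
    have := card_filter_add_card_filter_not (s := univ) fun i => Disjoint (S i) X
    rw [card_univ] at this
    omega
  obtain ⟨i, j, hi, hj, hij⟩ := one_lt_card_iff.1 hgood
  exact ⟨i, j, hij, (mem_filter.1 hi).2, (mem_filter.1 hj).2⟩

section ChainProd

variable {V Γ : Type*} [Group Γ]

theorem chainProd_append_cons (Λ : V → V → Γ) :
    ∀ (l₁ : List V) (x : V) (l₂ : List V),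
      chainProd Λ (l₁ ++ x :: l₂) = chainProd Λ (l₁ ++ [x]) * chainProd Λ (x :: l₂)
  | [], _, _ => by simp [chainProd]
  | [_], _, _ => by simp [chainProd]
  | a :: b :: l₁, x, l₂ => by
    simp only [List.cons_append, chainProd]
    rw [← List.cons_append, chainProd_append_cons Λ (b :: l₁), List.cons_append, mul_assoc]

theorem chainProd_map_of_potential {α : Type*} {R : α → α → Prop} {Λ : V → V → Γ}
    {f : α → V} {φ : α → Γ} (h : ∀ a b, R a b → Λ (f a) (f b) = φ a * (φ b)⁻¹) {b : α} :
    ∀ {a : α} {l : List α}, List.IsChain R (a :: (l ++ [b])) →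
      chainProd Λ ((a :: (l ++ [b])).map f) = φ a * (φ b)⁻¹
  | a, [], hl => by simp [chainProd, h a b (by simpa using hl)]
  | a, c :: l, hl => by
    rw [List.cons_append, List.isChain_cons_cons] at hl
    simp only [List.cons_append, List.map_cons, chainProd] at *
    rw [← List.map_cons, chainProd_map_of_potential h hl.2, h a c hl.1]
    group

def IsBalancedOff (Arc : V → V → Prop) (Λ : V → V → Γ) (X : Set V) : Prop :=
  ∀ (a : V) (rest : List V), (∀ w ∈ a :: rest, w ∉ X) →
    List.IsChain Arc (a :: rest ++ [a]) → chainProd Λ (a :: rest ++ [a]) = 1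

end ChainProd

section FlowGraph

variable {V Γ : Type*}

def flowProj (z : V) : V ⊕ Γ → V :=
  Sum.elim id fun _ => z

@[simp] theorem flowProj_inl (z u : V) : flowProj z (.inl u : V ⊕ Γ) = u := rfl

@[simp] theorem flowProj_inr (z : V) (g : Γ) : flowProj z (.inr g) = z := rfl

theorem notMem_map_flowProj {X : Set V} {z : V} (hzX : z ∉ X) {Q : List (V ⊕ Γ)}
    (hQ : ∀ u, Sum.inl u ∈ Q → u ∉ X) : ∀ w ∈ Q.map (flowProj z), w ∉ X := by
  simp only [List.mem_map]
  rintro _ ⟨u | g, hmem, rfl⟩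
  exacts [hQ u hmem, hzX]

variable [Group Γ] {Arc : V → V → Prop} {Λ : V → V → Γ} {Z : Set V} {z : V}

def flowPotential : V ⊕ Γ → Γ :=
  Sum.elim (fun _ => 1) id

theorem flowAdj.symm (hsymm : ∀ u v, Arc u v → Arc v u) {a b : V ⊕ Γ}
    (h : flowAdj Arc Λ Z z a b) : flowAdj Arc Λ Z z b a := by
  rcases a with u | g <;> rcases b with w | g'
  · exact ⟨h.1.symm, h.2.2.1, h.2.1, hsymm _ _ h.2.2.2⟩
  · exact h
  · exact h
  · exact h.elim

theorem flowAdj.arc (hsymm : ∀ u v, Arc u v → Arc v u) {a b : V ⊕ Γ}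
    (h : flowAdj Arc Λ Z z a b) : Arc (flowProj z a) (flowProj z b) := by
  rcases a with u | g <;> rcases b with w | g'
  · exact h.2.2.2
  · exact hsymm _ _ h.2.1
  · exact h.2.1
  · exact h.elim

theorem flowAdj.label (hlab : ∀ u v, Arc u v → Λ u v = (Λ v u)⁻¹)
    (huntangled : ∀ u v, Arc u v → u ∉ Z → v ∉ Z → Λ u v = 1) {a b : V ⊕ Γ}
    (h : flowAdj Arc Λ Z z a b) :
    Λ (flowProj z a) (flowProj z b) = flowPotential a * (flowPotential b)⁻¹ := by
  rcases a with u | g <;> rcases b with w | g'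
  · obtain ⟨-, hu, hw, huw⟩ := h
    simp [flowProj, flowPotential, huntangled u w huw hu hw]
  · obtain ⟨-, hzu, rfl⟩ := h
    simp [flowProj, flowPotential, hlab z u hzu]
  · obtain ⟨-, -, rfl⟩ := h
    simp [flowProj, flowPotential]
  · exact h.elim

theorem terminal_eq_of_flowAdj_paths (hsymm : ∀ u v, Arc u v → Arc v u)
    (hlab : ∀ u v, Arc u v → Λ u v = (Λ v u)⁻¹)
    (huntangled : ∀ u v, Arc u v → u ∉ Z → v ∉ Z → Λ u v = 1)
    {X : Set V} (hX : IsBalancedOff Arc Λ X) (hzX : z ∉ X) {v : V} (hvX : v ∉ X)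
    {Q₁ Q₂ : List (V ⊕ Γ)} {g₁ g₂ : Γ}
    (hc₁ : List.IsChain (flowAdj Arc Λ Z z) (.inl v :: (Q₁ ++ [.inr g₁])))
    (hc₂ : List.IsChain (flowAdj Arc Λ Z z) (.inl v :: (Q₂ ++ [.inr g₂])))
    (hQ₁ : ∀ u, Sum.inl u ∈ Q₁ → u ∉ X) (hQ₂ : ∀ u, Sum.inl u ∈ Q₂ → u ∉ X) :
    g₁ = g₂ := by
  set A := Q₁.map (flowProj z)
  set B := (Q₂.map (flowProj z)).reverse
  have hc₂' : List.IsChain (flowAdj Arc Λ Z z) (.inr g₂ :: (Q₂.reverse ++ [.inl v])) := by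
    simpa using List.isChain_reverse.2 (hc₂.imp fun _ _ h => h.symm hsymm)
  have hwalk₁ : List.IsChain Arc (v :: (A ++ [z])) := by
    simpa using (List.isChain_map _).2 (hc₁.imp fun _ _ h => h.arc hsymm)
  have hwalk₂ : List.IsChain Arc (z :: (B ++ [v])) := by
    simpa using (List.isChain_map _).2 (hc₂'.imp fun _ _ h => h.arc hsymm)
  have hlabel₁ : chainProd Λ (v :: (A ++ [z])) = g₁⁻¹ := by
    simpa [flowPotential] using
      chainProd_map_of_potential (fun _ _ h => h.label hlab huntangled) hc₁
  have hlabel₂ : chainProd Λ (z :: (B ++ [v])) = g₂ := by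
    simpa [flowPotential] using
      chainProd_map_of_potential (fun _ _ h => h.label hlab huntangled) hc₂'
  have hclosed : List.IsChain Arc (v :: (A ++ z :: B) ++ [v]) := by
    simpa using List.IsChain.append_overlap (l₁ := v :: A) (l₂ := [z])
      (by simpa using hwalk₁) (by simpa using hwalk₂) (List.cons_ne_nil _ _)
  have havoid : ∀ w ∈ v :: (A ++ z :: B), w ∉ X := by
    simp only [List.mem_cons, List.mem_append]
    rintro w (rfl | hA | rfl | hB)
    exacts [hvX, notMem_map_flowProj hzX hQ₁ w hA, hzX,
      notMem_map_flowProj hzX hQ₂ w (List.mem_reverse.1 hB)]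
  have hnull := hX v _ havoid hclosed
  rw [show v :: (A ++ z :: B) ++ [v] = (v :: A) ++ z :: (B ++ [v]) by simp,
    chainProd_append_cons, List.cons_append, hlabel₁, hlabel₂] at hnull
  exact inv_mul_eq_one.1 hnull

end FlowGraph

theorem forced_vertex_general {V Γ : Type*} [Group Γ]
    (Arc : V → V → Prop) (Λ : V → V → Γ)
    (hsymm : ∀ u v, Arc u v → Arc v u)
    (hlab : ∀ u v, Arc u v → Λ u v = (Λ v u)⁻¹)
    (Z : Set V)
    (huntangled : ∀ u v, Arc u v → u ∉ Z → v ∉ Z → Λ u v = 1)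
    (z : V) (hz : z ∈ Z) (k : ℕ) (v : V)
    (P : Fin (k + 2) → List (V ⊕ Γ))
    (hP : ∀ i, (P i).Chain' (flowAdj Arc Λ Z z) ∧ (P i).Nodup ∧
      (P i).head? = some (Sum.inl v) ∧
      ∃ g : Γ, (P i).getLast? = some (Sum.inr g) ∧
        ∃ u, u ∉ Z ∧ Arc z u ∧ Λ z u = g)
    (hdisj : ∀ i j, i ≠ j → ∀ w ∈ P i, w ∈ P j → w = Sum.inl v)
    (X : Finset V) (hXZ : ∀ x ∈ X, x ∉ Z) (hXk : X.card ≤ k)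
    (hsol : ∀ (a : V) (rest : List V), (∀ w ∈ a :: rest, w ∉ X) →
      List.Chain' Arc (a :: rest ++ [a]) → chainProd Λ (a :: rest ++ [a]) = 1) :
    v ∈ X := by
  by_contra hvX
  choose hchain _ hhead g hlast _ using hP
  choose Q hQ using fun i => List.exists_eq_cons_append_singleton (hhead i) (hlast i) Sum.inl_ne_inr
  have hS : Pairwise (Disjoint on fun i => {u | Sum.inl u ∈ P i} \ {v}) := fun i j hij =>
    Set.disjoint_left.2 fun u hi hj => hi.2 (Sum.inl_injective (hdisj i j hij _ hi.1 hj.1))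
  obtain ⟨i, j, hij, hi, hj⟩ := exists_ne_disjoint_of_card_add_two_le hS X (by simpa using hXk)
  have havoid : ∀ {m}, Disjoint ({u | Sum.inl u ∈ P m} \ {v}) ↑X → ∀ u, Sum.inl u ∈ Q m → u ∉ X :=
    fun hm u hu huX => Set.disjoint_left.1 hm ⟨by simp [hQ, hu], fun h => hvX (h ▸ huX)⟩ huX
  have hgij : g i = g j := terminal_eq_of_flowAdj_paths hsymm hlab huntangled hsol
    (fun hzX => hXZ z hzX hz) hvX (hQ i ▸ hchain i) (hQ j ▸ hchain j) (havoid hi) (havoid hj)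
  exact Sum.inl_ne_inr (hdisj i j hij (Sum.inr (g i)) (by simp [hQ]) (by simp [hQ, hgij])).symm

/-- Lemma 4: in an untangled instance, if in the flow graph `F(G,Λ,Z,z)` there are
at least `k+2` paths from `v` to `Σ_z` that are vertex-disjoint apart from `v`,
then `v` belongs to every solution of size at most `k`. -/
theorem forced_vertex {V Γ : Type*} [Fintype V] [DecidableEq V] [Group Γ]
    (Arc : V → V → Prop) (Λ : V → V → Γ)
    (hsymm : ∀ u v, Arc u v → Arc v u)
    (hlab : ∀ u v, Arc u v → Λ u v = (Λ v u)⁻¹)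
    (Z : Set V)
    (hZsol : ∀ (a : V) (rest : List V), (∀ w ∈ a :: rest, w ∉ Z) →
      List.Chain' Arc (a :: rest ++ [a]) → chainProd Λ (a :: rest ++ [a]) = 1)
    (huntangled : ∀ u v, Arc u v → u ∉ Z → v ∉ Z → Λ u v = 1)
    (z : V) (hz : z ∈ Z) (k : ℕ) (v : V) (hv : v ∉ Z)
    (P : Fin (k + 2) → List (V ⊕ Γ))
    (hP : ∀ i, (P i).Chain' (flowAdj Arc Λ Z z) ∧ (P i).Nodup ∧
      (P i).head? = some (Sum.inl v) ∧
      ∃ g : Γ, (P i).getLast? = some (Sum.inr g) ∧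
        ∃ u, u ∉ Z ∧ Arc z u ∧ Λ z u = g)
    (hdisj : ∀ i j, i ≠ j → ∀ w ∈ P i, w ∈ P j → w = Sum.inl v)
    (X : Finset V) (hXZ : ∀ x ∈ X, x ∉ Z) (hXk : X.card ≤ k)
    (hsol : ∀ (a : V) (rest : List V), (∀ w ∈ a :: rest, w ∉ X) →
      List.Chain' Arc (a :: rest ++ [a]) → chainProd Λ (a :: rest ++ [a]) = 1) :
    v ∈ X :=
  forced_vertex_general Arc Λ hsymm hlab Z huntangled z hz k v P hP hdisj X hXZ hXk hsol
end

section
/- If a closed walk W in a Σ-labeled graph satisfies Λ(W) ≠ 1_Σ, then W contains a simple cycle C (a subcycle of the walk) with Λ(C) ≠ 1_Σ. -/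
open List

theorem List.exists_eq_append_cons_append_cons_of_not_nodup {α : Type*} {l : List α}
    (h : ¬l.Nodup) : ∃ x xs ys zs, l = xs ++ x :: (ys ++ x :: zs) := by
  obtain ⟨x, hx⟩ := exists_duplicate_iff_not_nodup.mpr h
  obtain ⟨r₁, r₂, rfl, hr₁, hr₂⟩ := cons_sublist_iff.mp (duplicate_iff_sublist.mp hx)
  obtain ⟨xs, ys, rfl⟩ := append_of_mem hr₁
  obtain ⟨ys', zs, rfl⟩ := append_of_mem (singleton_sublist.mp hr₂)
  exact ⟨x, xs, ys ++ ys', zs, by simp⟩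

theorem List.IsChain.loop_and_shortcut {α : Type*} {R : α → α → Prop} {x : α}
    {xs ys zs : List α} (h : IsChain R (xs ++ x :: (ys ++ x :: zs))) :
    IsChain R (x :: ys ++ [x]) ∧ IsChain R (xs ++ x :: zs) := by
  obtain ⟨hxs, hrest⟩ := isChain_split.mp h
  obtain ⟨hloop, hzs⟩ := (isChain_split (l₁ := x :: ys)).mp hrest
  exact ⟨hloop, isChain_split.mpr ⟨hxs, hzs⟩⟩

section

variable {V Γ : Type*} [Group Γ] (Λ : V → V → Γ)

theorem chainProd_append_cons_s13 (xs : List V) (v : V) (ys : List V) :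
    chainProd Λ (xs ++ v :: ys) = chainProd Λ (xs ++ [v]) * chainProd Λ (v :: ys) := by
  induction xs using List.twoStepInduction with
  | nil => simp [chainProd]
  | singleton u => cases ys <;> simp [chainProd]
  | cons_cons u w t _ ih => simp only [cons_append, chainProd] at ih ⊢; rw [ih, mul_assoc]

theorem chainProd_loop_ne_one_or_shortcut_ne_one {x : V} {xs ys zs : List V}
    (h : chainProd Λ (xs ++ x :: (ys ++ x :: zs)) ≠ 1) :
    chainProd Λ (x :: ys ++ [x]) ≠ 1 ∨ chainProd Λ (xs ++ x :: zs) ≠ 1 := by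
  contrapose! h
  obtain ⟨hloop, hshort⟩ := h
  rw [chainProd_append_cons_s13, ← cons_append, chainProd_append_cons_s13 Λ (x :: ys), hloop, one_mul,
    ← chainProd_append_cons_s13, hshort]

theorem exists_shorter_closed_walk_chainProd_ne_one {Arc : V → V → Prop} {a : V} {rest : List V}
    (hchain : IsChain Arc (a :: rest ++ [a])) (hnn : chainProd Λ (a :: rest ++ [a]) ≠ 1)
    (hdup : ¬(a :: rest).Nodup) :
    ∃ c rest₂, rest₂.length < rest.length ∧ c :: rest₂ ⊆ a :: rest ∧
      IsChain Arc (c :: rest₂ ++ [c]) ∧ chainProd Λ (c :: rest₂ ++ [c]) ≠ 1 := by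
  obtain ⟨x, xs, ys, zs, hsplit⟩ := exists_eq_append_cons_append_cons_of_not_nodup hdup
  have hlen := congrArg length hsplit
  simp only [length_cons, length_append] at hlen
  have hwalk : a :: rest ++ [a] = xs ++ x :: (ys ++ x :: (zs ++ [a])) := by simp [hsplit]
  rw [hwalk] at hchain hnn
  obtain ⟨hchain_loop, hchain_short⟩ := hchain.loop_and_shortcut
  rcases chainProd_loop_ne_one_or_shortcut_ne_one Λ hnn with hloop | hshort
  · refine ⟨x, ys, by omega, ?_, hchain_loop, hloop⟩
    rw [hsplit]
    exact cons_subset.mpr ⟨by simp, fun w hw => by simp [hw]⟩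
  · obtain ⟨rest₂, hrest₂⟩ : ∃ rest₂, a :: rest₂ = xs ++ x :: zs := by
      cases xs <;> simp_all
    have hlen₂ := congrArg length hrest₂
    simp only [length_cons, length_append] at hlen₂
    have hshortcut : xs ++ x :: (zs ++ [a]) = a :: rest₂ ++ [a] := by simp [hrest₂]
    rw [hshortcut] at hchain_short hshort
    refine ⟨a, rest₂, by omega, ?_, hchain_short, hshort⟩
    rw [hrest₂, hsplit]
    intro w
    simp only [mem_append, mem_cons]
    tauto

end

theorem nonNull_closed_walk_has_nonNull_simple_cycle_general {V Γ : Type*} [Group Γ]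
    (Arc : V → V → Prop) (Λ : V → V → Γ)
    (a : V) (rest : List V)
    (hchain : List.Chain' Arc (a :: rest ++ [a]))
    (hnn : chainProd Λ (a :: rest ++ [a]) ≠ 1) :
    ∃ (b : V) (rest' : List V),
      (∀ w ∈ b :: rest', w ∈ a :: rest) ∧
      List.Chain' Arc (b :: rest' ++ [b]) ∧
      (b :: rest').Nodup ∧
      chainProd Λ (b :: rest' ++ [b]) ≠ 1 := by
  induction hn : rest.length using Nat.strong_induction_on generalizing a rest with
  | _ n ih =>
    by_cases hnodup : (a :: rest).Nodup
    · exact ⟨a, rest, fun _ => id, hchain, hnodup, hnn⟩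
    obtain ⟨c, rest₂, hshorter, hsub, hchain₂, hnn₂⟩ :=
      exists_shorter_closed_walk_chainProd_ne_one Λ hchain hnn hnodup
    obtain ⟨b, rest', hsub', hcycle⟩ := ih _ (hn ▸ hshorter) c rest₂ hchain₂ hnn₂ rfl
    exact ⟨b, rest', fun w hw => hsub (hsub' w hw), hcycle⟩

/-- If a closed walk `W` in a Σ-labeled graph has `Λ(W) ≠ 1`, then it contains a
simple non-null subcycle: a simple cycle whose vertices all lie on `W` and whose
label is not `1`. -/
theorem nonNull_closed_walk_has_nonNull_simple_cycle {V Γ : Type*} [Group Γ]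
    (Arc : V → V → Prop) (Λ : V → V → Γ)
    (hsymm : ∀ u v, Arc u v → Arc v u)
    (hlab : ∀ u v, Arc u v → Λ u v = (Λ v u)⁻¹)
    (a : V) (rest : List V)
    (hchain : List.Chain' Arc (a :: rest ++ [a]))
    (hnn : chainProd Λ (a :: rest ++ [a]) ≠ 1) :
    ∃ (b : V) (rest' : List V),
      (∀ w ∈ b :: rest', w ∈ a :: rest) ∧
      List.Chain' Arc (b :: rest' ++ [b]) ∧
      (b :: rest').Nodup ∧
      chainProd Λ (b :: rest' ++ [b]) ≠ 1 :=
  nonNull_closed_walk_has_nonNull_simple_cycle_general Arc Λ a rest hchain hnn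
end
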